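/- arXiv:2604.19611 — 4 statements merged into one kernel-verified Lean document; each statement's English description precedes it below -/
import Mathlib

section
/- Let V be a real vector space, x a seminorm on V, and α, β ∈ V with x(α) > 0 and x(β) > 0. Then x(α+β) = x(α) + x(β) if and only if every point of the segment joining α/x(α) to β/x(β) has seminorm exactly 1; that is, if and only if for every t ∈ [0,1] one has x( t·(x(α))⁻¹·α + (1−t)·(x(β))⁻¹·β ) = 1. -/
/-! If `x (α + β) = x α + x β`, the triangle inequality for
`d • (α + β) = (c • α + d • β) + (d - c) • α` (with `0 ≤ c ≤ d`) shows that `x` is additive on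
the whole cone `{c • α + d • β | c, d ≥ 0}`; the segment lies in that cone, where `x` takes the
value `t + (1 - t) = 1`. Conversely, the point of the segment at `t = x α / (x α + x β)` is
`(α + β) / (x α + x β)`. -/

namespace Seminorm

variable {V : Type*} [AddCommGroup V] [Module ℝ V] (x : Seminorm ℝ V)

theorem map_smul_of_nonneg {c : ℝ} (hc : 0 ≤ c) (v : V) : x (c • v) = c * x v := by
  rw [map_smul_eq_mul, Real.norm_of_nonneg hc]

theorem map_smul_add_smul_le (c d : ℝ) (hc : 0 ≤ c) (hd : 0 ≤ d) (α β : V) :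
    x (c • α + d • β) ≤ c * x α + d * x β :=
  calc x (c • α + d • β) ≤ x (c • α) + x (d • β) := map_add_le_add x _ _
    _ = c * x α + d * x β := by rw [x.map_smul_of_nonneg hc, x.map_smul_of_nonneg hd]

theorem le_map_smul_add_smul_of_map_add_eq {α β : V} (h : x (α + β) = x α + x β)
    {c d : ℝ} (hc : 0 ≤ c) (hcd : c ≤ d) :
    c * x α + d * x β ≤ x (c • α + d • β) := by
  have hsplit : d • (α + β) = (c • α + d • β) + (d - c) • α := by
    rw [smul_add, sub_smul]; abel
  have htri := map_add_le_add x (c • α + d • β) ((d - c) • α)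
  rw [← hsplit, x.map_smul_of_nonneg (hc.trans hcd), h,
    x.map_smul_of_nonneg (sub_nonneg.2 hcd)] at htri
  linarith

theorem map_smul_add_smul_of_map_add_eq {α β : V} (h : x (α + β) = x α + x β)
    {c d : ℝ} (hc : 0 ≤ c) (hd : 0 ≤ d) :
    x (c • α + d • β) = c * x α + d * x β := by
  refine le_antisymm (x.map_smul_add_smul_le c d hc hd α β) ?_
  rcases le_total c d with hcd | hdc
  · exact x.le_map_smul_add_smul_of_map_add_eq h hc hcd
  · have h' : x (β + α) = x β + x α := by rw [add_comm, h, add_comm]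
    have hswap := x.le_map_smul_add_smul_of_map_add_eq h' hd hdc
    rw [add_comm (d • β)] at hswap
    linarith

end Seminorm

/-- Additivity of a seminorm at `α` and `β` (with positive seminorms) is equivalent to
the whole segment between the normalizations `α / x α` and `β / x β` lying on the
boundary `{v | x v = 1}` of the unit ball. -/
theorem seminorm_add_eq_iff_segment_on_sphere
    {V : Type*} [AddCommGroup V] [Module ℝ V] (x : Seminorm ℝ V) (α β : V)
    (hα : 0 < x α) (hβ : 0 < x β) :
    x (α + β) = x α + x β ↔
      ∀ t : ℝ, t ∈ Set.Icc (0 : ℝ) 1 →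
        x (t • (x α)⁻¹ • α + (1 - t) • (x β)⁻¹ • β) = 1 := by
  simp_rw [smul_smul]
  constructor
  · rintro h t ⟨ht0, ht1⟩
    rw [x.map_smul_add_smul_of_map_add_eq h (mul_nonneg ht0 (inv_nonneg.2 hα.le))
      (mul_nonneg (sub_nonneg.2 ht1) (inv_nonneg.2 hβ.le))]
    field_simp
    ring
  · intro h
    have hsum : 0 < x α + x β := add_pos hα hβ
    have hmid := h (x α / (x α + x β))
      ⟨by positivity, (div_le_one hsum).2 (le_add_of_nonneg_right hβ.le)⟩
    have hcoef₁ : x α / (x α + x β) * (x α)⁻¹ = (x α + x β)⁻¹ := by field_simp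
    have hcoef₂ : (1 - x α / (x α + x β)) * (x β)⁻¹ = (x α + x β)⁻¹ := by field_simp; ring
    rw [hcoef₁, hcoef₂, ← smul_add, x.map_smul_of_nonneg (inv_nonneg.2 hsum.le)] at hmid
    field_simp at hmid
    exact hmid
end

section
/- Let V be a real vector space, x a seminorm on V, and α, β ∈ V. Then x(α+β) = x(α) + x(β) if and only if there exists a linear functional ℓ : V → ℝ such that ℓ(v) ≤ x(v) for all v ∈ V, ℓ(α) = x(α), and ℓ(β) = x(β). -/
namespace Seminorm

variable {V : Type*} [AddCommGroup V] [Module ℝ V]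

/-- Hahn–Banach, applied to the functional `c • v ↦ c * p v` on the line through `v`. -/
theorem exists_linearMap_le_apply_eq (p : Seminorm ℝ V) (v : V) :
    ∃ ℓ : V →ₗ[ℝ] ℝ, (∀ w, ℓ w ≤ p w) ∧ ℓ v = p v := by
  -- `c • v ↦ c * p v` is well defined: `c • v = 0` forces `|c| * p v = p (c • v) = 0`.
  have hwd : ∀ c : ℝ, c • v = 0 → c • p v = 0 := fun c hc => by
    rw [smul_eq_mul, ← abs_eq_zero, abs_mul, abs_of_nonneg (apply_nonneg p v), ← Real.norm_eq_abs,
      ← map_smul_eq_mul, hc, map_zero]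
  let f : V →ₗ.[ℝ] ℝ := LinearPMap.mkSpanSingleton' v (p v) hwd
  have hf_le : ∀ w, f w ≤ p w := by
    rintro ⟨_, hw⟩
    obtain ⟨c, rfl⟩ := Submodule.mem_span_singleton.mp hw
    calc f ⟨c • v, hw⟩ = c * p v := LinearPMap.mkSpanSingleton'_apply v (p v) hwd c hw
      _ ≤ |c| * p v := mul_le_mul_of_nonneg_right (le_abs_self c) (apply_nonneg p v)
      _ = p (c • v) := (map_smul_eq_mul p c v).symm
  obtain ⟨ℓ, hℓf, hℓp⟩ := Module.Dual.exists_extension_of_le_seminorm_real f.domain f.toFun hf_le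
  have hv : v ∈ f.domain := Submodule.mem_span_singleton_self v
  exact ⟨ℓ, fun w => (le_abs_self _).trans (hℓp w),
    (hℓf ⟨v, hv⟩).trans (LinearPMap.mkSpanSingleton'_apply_self v (p v) hwd hv)⟩

end Seminorm

/-- Dual formulation of the additivity lemma: a seminorm is additive at `α` and `β`
if and only if there is a linear functional dominated by `x` attaining `x` at both
`α` and `β`. -/
theorem seminorm_add_eq_iff_exists_functional
    {V : Type*} [AddCommGroup V] [Module ℝ V] (x : Seminorm ℝ V) (α β : V) :
    x (α + β) = x α + x β ↔
      ∃ ℓ : V →ₗ[ℝ] ℝ, (∀ v : V, ℓ v ≤ x v) ∧ ℓ α = x α ∧ ℓ β = x β := by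
  constructor
  · intro hadd
    obtain ⟨ℓ, hℓx, hℓ⟩ := x.exists_linearMap_le_apply_eq (α + β)
    have hsum : ℓ α + ℓ β = x α + x β := by rw [← map_add, hℓ, hadd]
    have hα := hℓx α
    have hβ := hℓx β
    exact ⟨ℓ, hℓx, by linarith, by linarith⟩
  · rintro ⟨ℓ, hℓx, hα, hβ⟩
    have hsum : x α + x β ≤ x (α + β) := by
      rw [← hα, ← hβ, ← map_add]
      exact hℓx _
    exact le_antisymm (map_add_le_add x α β) hsum
end

section
/- Fix integers a, b, c with a ≤ −2, b ≥ 1, c ≥ 1. Work in ℝ³ with the standard dot product and set γ₁ := (b+c−1, −a−c−1, 1+a−b), γ₂ := (b+c−1, 1+a−c, −a−b−1), γ₃ := (1−b−c, −a+c−3, 1+a+b), γ₄ := (1−b−c, 1+a+c, −a+b−3), and B := {v ∈ ℝ³ : |γᵢ · v| ≤ 1 for i = 1,2,3,4}. Let w₁ := (b+c−1)⁻¹ · (1, 0, 0), w₂ := ((−a−1)(b+c−1))⁻¹ · (c, b+c−1, 0), w₃ := ((−a−1)(b+c−1))⁻¹ · (b, 0, b+c−1), and w₄ := (1, 1, 1).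 Then B equals the convex hull of the eight points {w₁, −w₁, w₂, −w₂, w₃, −w₃, w₄, −w₄}; in particular B is a bounded convex polytope with these points as its vertices. -/
/-!
In the linear coordinates `u = (b+c-1)v₀ - c v₁ - b v₂`, `d = (-a-1)(v₁ - v₂)`,
`e = (1-b-c)v₀ + (c-1)v₁ + (b-1)v₂` one has `γ₁ ⬝ᵥ v = u + d`, `γ₂ ⬝ᵥ v = u - d`,
`γ₃ ⬝ᵥ v = e + (1 - μ) d` and `γ₄ ⬝ᵥ v = e - (1 - μ) d`, where `μ = 1/(-a-1) ∈ (0, 1]`. Since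
`|p| + |q| ≤ 1 ↔ |p + q| ≤ 1 ∧ |p - q| ≤ 1`, this turns `B` into the model polytope
`|u| + |d| ≤ 1, |e| + (1 - μ)|d| ≤ 1`, and the points `±wᵢ` into `(±1, 0, ±1)`, `(0, ±1, ±μ)`.
Splitting `e = m + μ n` with `|m| ≤ 1 - |d|`, `|n| ≤ |d|` writes every point of the model as a
combination of four of these eight points with coefficients of total absolute value at most `1`,
so the model is their convex hull. Each of the eight points `x` is the unique maximiser of
`y ↦ x ⬝ᵥ y` on the model, hence extreme.
-/

open Matrix
open scoped Pointwise

theorem abs_add_abs_le_iff {p q r : ℝ} : |p| + |q| ≤ r ↔ |p + q| ≤ r ∧ |p - q| ≤ r := by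
  refine ⟨fun h => ⟨(abs_add_le p q).trans h, (abs_sub p q).trans h⟩, fun ⟨h₁, h₂⟩ => ?_⟩
  rw [abs_le] at h₁ h₂
  cases abs_cases p <;> cases abs_cases q <;> linarith

theorem exists_abs_le_abs_sub_mul_le {e α β μ : ℝ} (hα : 0 ≤ α) (hβ : 0 ≤ β) (hμ : 0 < μ)
    (h : |e| ≤ α + μ * β) : ∃ n, |n| ≤ β ∧ |e - μ * n| ≤ α := by
  rcases le_or_gt |e| α with he | he
  · exact ⟨0, by simpa using hβ, by simpa using he⟩
  rcases lt_abs.mp he with he | he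
  · refine ⟨(e - α) / μ, ?_, ?_⟩
    · rw [abs_of_pos (by linarith)] at h
      rw [abs_of_nonneg (by positivity), div_le_iff₀ hμ]
      linarith
    · rw [mul_div_cancel₀ _ hμ.ne', sub_sub_cancel, abs_of_nonneg hα]
  · refine ⟨(e + α) / μ, ?_, ?_⟩
    · rw [abs_of_neg (by linarith)] at h
      rw [abs_of_nonpos (div_nonpos_of_nonpos_of_nonneg (by linarith) hμ.le), neg_le,
        le_div_iff₀ hμ]
      linarith
    · rw [mul_div_cancel₀ _ hμ.ne', sub_add_cancel_left, abs_neg, abs_of_nonneg hα]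

section Convex

variable {E ι : Type*} [AddCommGroup E] [Module ℝ E] {K : Set E}

theorem Convex.sum_smul_mem_sum_abs_smul (hK : Convex ℝ K) (h0 : 0 ∈ K) {s : Finset ι}
    {p : ι → E} (hp : ∀ i ∈ s, p i ∈ K ∧ -p i ∈ K) (c : ι → ℝ) :
    ∑ i ∈ s, c i • p i ∈ (∑ i ∈ s, |c i|) • K := by
  classical
  induction s using Finset.induction_on with
  | empty => simpa using Set.smul_mem_smul_set (a := (0 : ℝ)) h0
  | insert j s hj ih =>
    rw [Finset.sum_insert hj, Finset.sum_insert hj,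
      hK.add_smul (abs_nonneg _) (Finset.sum_nonneg fun i _ => abs_nonneg _)]
    refine Set.add_mem_add ?_ (ih fun i hi => hp i (Finset.mem_insert_of_mem hi))
    obtain ⟨hpj, hnpj⟩ := hp j (Finset.mem_insert_self j s)
    rcases abs_cases (c j) with ⟨h, -⟩ | ⟨h, -⟩ <;> rw [h]
    · exact Set.smul_mem_smul_set hpj
    · simpa using Set.smul_mem_smul_set (a := -c j) hnpj

theorem Convex.sum_smul_mem_of_sum_abs_le_one (hK : Convex ℝ K) (h0 : 0 ∈ K) {s : Finset ι}
    {p : ι → E} (hp : ∀ i ∈ s, p i ∈ K ∧ -p i ∈ K) {c : ι → ℝ} (hc : ∑ i ∈ s, |c i| ≤ 1) :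
    ∑ i ∈ s, c i • p i ∈ K := by
  obtain ⟨x, hx, hcx⟩ := hK.sum_smul_mem_sum_abs_smul h0 hp c
  rw [← hcx]
  exact hK.smul_mem_of_zero_mem h0 hx ⟨Finset.sum_nonneg fun i _ => abs_nonneg _, hc⟩

end Convex

theorem mem_exposedPoints_of_dotProduct {n : ℕ} {A : Set (Fin n → ℝ)} {x : Fin n → ℝ}
    (f : Fin n → ℝ) (hx : x ∈ A) (h : ∀ y ∈ A, f ⬝ᵥ y ≤ f ⬝ᵥ x ∧ (f ⬝ᵥ x ≤ f ⬝ᵥ y → y = x)) :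
    x ∈ A.exposedPoints ℝ :=
  ⟨hx, LinearMap.toContinuousLinearMap (dotProductBilin ℝ ℝ f), h⟩

section Model

variable {μ : ℝ}

def modelPolytope (μ : ℝ) : Set (Fin 3 → ℝ) :=
  {z | |z 0| + |z 1| ≤ 1 ∧ |z 2| + (1 - μ) * |z 1| ≤ 1}

def modelVertices (μ : ℝ) : Set (Fin 3 → ℝ) :=
  {![1, 0, -1], -![1, 0, -1], ![0, 1, -μ], -![0, 1, -μ], ![0, -1, -μ], -![0, -1, -μ],
    ![-1, 0, -1], -![-1, 0, -1]}

theorem convex_modelPolytope (hμ : μ ≤ 1) : Convex ℝ (modelPolytope μ) := by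
  rintro x ⟨hx₁, hx₂⟩ y ⟨hy₁, hy₂⟩ s t hs ht hst
  have key : ∀ i, |(s • x + t • y) i| ≤ s * |x i| + t * |y i| := fun i => by
    simpa [abs_mul, abs_of_nonneg hs, abs_of_nonneg ht] using abs_add_le (s * x i) (t * y i)
  have h₁ := mul_le_mul_of_nonneg_left (key 1) (sub_nonneg.2 hμ)
  constructor
  · nlinarith [key 0, key 1]
  · nlinarith [key 2]

theorem modelVertices_subset_modelPolytope (hμ : 0 ≤ μ) : modelVertices μ ⊆ modelPolytope μ := by
  intro z hz
  simp only [modelVertices, Set.mem_insert_iff, Set.mem_singleton_iff] at hz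
  rcases hz with rfl | rfl | rfl | rfl | rfl | rfl | rfl | rfl <;>
    simp [modelPolytope, abs_of_nonneg hμ]

theorem modelPolytope_subset_convexHull (hμ : 0 < μ) :
    modelPolytope μ ⊆ convexHull ℝ (modelVertices μ) := by
  rintro z ⟨hud, hed⟩
  obtain ⟨n, hn, hm⟩ := exists_abs_le_abs_sub_mul_le (e := z 2) (α := 1 - |z 1|)
    (by linarith [abs_nonneg (z 0)]) (abs_nonneg (z 1)) hμ (by linarith)
  set m := z 2 - μ * n
  set q : Fin 4 → Fin 3 → ℝ := ![![1, 0, -1], ![0, 1, -μ], ![0, -1, -μ], ![-1, 0, -1]]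
  -- The outer coefficients sum to `-m` and differ by `z 0`, the inner ones sum to `-n` and differ
  -- by `z 1`; as `|α| + |β| = max |α + β| |α - β|`, their total weight is at most `1`.
  have hz : z =
      ∑ i, ![(z 0 - m) / 2, (z 1 - n) / 2, (-z 1 - n) / 2, (-z 0 - m) / 2] i • q i := by
    ext i; fin_cases i <;> simp [Fin.sum_univ_four, q, m] <;> ring
  have h₁ : |(z 0 - m) / 2| + |(-z 0 - m) / 2| ≤ 1 - |z 1| := by
    refine abs_add_abs_le_iff.2 ⟨?_, ?_⟩
    · rw [show (z 0 - m) / 2 + (-z 0 - m) / 2 = -m by ring, abs_neg]; exact hm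
    · rw [show (z 0 - m) / 2 - (-z 0 - m) / 2 = z 0 by ring]; linarith
  have h₂ : |(z 1 - n) / 2| + |(-z 1 - n) / 2| ≤ |z 1| := by
    refine abs_add_abs_le_iff.2 ⟨?_, ?_⟩
    · rw [show (z 1 - n) / 2 + (-z 1 - n) / 2 = -n by ring, abs_neg]; exact hn
    · rw [show (z 1 - n) / 2 - (-z 1 - n) / 2 = z 1 by ring]
  have hK := convex_convexHull ℝ (modelVertices μ)
  have hq : ∀ i, q i ∈ convexHull ℝ (modelVertices μ) ∧ -q i ∈ convexHull ℝ (modelVertices μ) :=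
    fun i => by fin_cases i <;> constructor <;> apply subset_convexHull <;> simp [q, modelVertices]
  have h0 : (0 : Fin 3 → ℝ) ∈ convexHull ℝ (modelVertices μ) :=
    midpoint_self_neg ℝ (q 0) ▸ hK.midpoint_mem (hq 0).1 (hq 0).2
  rw [hz]
  refine hK.sum_smul_mem_of_sum_abs_le_one h0 (fun i _ => hq i) ?_
  simp only [Fin.sum_univ_four, cons_val_zero, cons_val_one, cons_val]
  linarith

theorem modelPolytope_eq_convexHull (hμ₀ : 0 < μ) (hμ₁ : μ ≤ 1) :
    modelPolytope μ = convexHull ℝ (modelVertices μ) :=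
  (modelPolytope_subset_convexHull hμ₀).antisymm
    (convexHull_min (modelVertices_subset_modelPolytope hμ₀.le) (convex_modelPolytope hμ₁))

theorem corner_mem_exposedPoints_modelPolytope (hμ : μ < 2) {x : Fin 3 → ℝ} (h₀ : |x 0| = 1)
    (h₁ : x 1 = 0) (h₂ : |x 2| = 1) : x ∈ (modelPolytope μ).exposedPoints ℝ := by
  refine mem_exposedPoints_of_dotProduct x ⟨by simp [h₀, h₁], by simp [h₁, h₂]⟩
    fun y ⟨hy₁, hy₂⟩ => ?_
  have hx₀ : x 0 * x 0 = 1 := by rw [← abs_mul_abs_self, h₀, one_mul]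
  have hx₂ : x 2 * x 2 = 1 := by rw [← abs_mul_abs_self, h₂, one_mul]
  have hxy₀ : x 0 * y 0 ≤ |y 0| := (le_abs_self _).trans (by rw [abs_mul, h₀, one_mul])
  have hxy₂ : x 2 * y 2 ≤ |y 2| := (le_abs_self _).trans (by rw [abs_mul, h₂, one_mul])
  have hd : 0 ≤ (2 - μ) * |y 1| := mul_nonneg (by linarith) (abs_nonneg _)
  simp only [dotProduct, Fin.sum_univ_three, h₁, zero_mul, add_zero, hx₀, hx₂]
  refine ⟨by linarith, fun h => ?_⟩
  have hy₁0 : |y 1| = 0 := by nlinarith [abs_nonneg (y 1)]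
  have e₀ : y 0 = x 0 := by linear_combination x 0 * (by linarith : x 0 * y 0 = 1) - y 0 * hx₀
  have e₂ : y 2 = x 2 := by linear_combination x 2 * (by linarith : x 2 * y 2 = 1) - y 2 * hx₂
  ext i; fin_cases i
  exacts [e₀, (abs_eq_zero.1 hy₁0).trans h₁.symm, e₂]

theorem apex_mem_exposedPoints_modelPolytope (hμ : 0 < μ) {x : Fin 3 → ℝ} (h₀ : x 0 = 0)
    (h₁ : |x 1| = 1) (h₂ : |x 2| = μ) : x ∈ (modelPolytope μ).exposedPoints ℝ := by
  refine mem_exposedPoints_of_dotProduct x ⟨by simp [h₀, h₁], by simp [h₁, h₂]⟩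
    fun y ⟨hy₁, hy₂⟩ => ?_
  have hx₁ : x 1 * x 1 = 1 := by rw [← abs_mul_abs_self, h₁, one_mul]
  have hx₂ : x 2 * x 2 = μ * μ := by rw [← abs_mul_abs_self, h₂]
  have hxy₁ : x 1 * y 1 ≤ |y 1| := (le_abs_self _).trans (by rw [abs_mul, h₁, one_mul])
  have hxy₂ : x 2 * y 2 ≤ μ * |y 2| := (le_abs_self _).trans (by rw [abs_mul, h₂])
  have hy₂μ : μ * |y 2| ≤ μ * (1 - (1 - μ) * |y 1|) :=
    mul_le_mul_of_nonneg_left (by linarith) hμ.le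
  have hpos : 0 < 1 - μ + μ * μ := by nlinarith [sq_nonneg (μ - 1)]
  have hy₁le : (1 - μ + μ * μ) * |y 1| ≤ 1 - μ + μ * μ :=
    mul_le_of_le_one_right hpos.le (by linarith [abs_nonneg (y 0)])
  simp only [dotProduct, Fin.sum_univ_three, h₀, zero_mul, zero_add, hx₁, hx₂]
  refine ⟨by nlinarith, fun h => ?_⟩
  have hy₁1 : |y 1| = 1 := by nlinarith [abs_nonneg (y 0)]
  have e₀ : y 0 = 0 := abs_eq_zero.1 (by linarith [abs_nonneg (y 0)])
  have e₁ : y 1 = x 1 := by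
    linear_combination x 1 * (by nlinarith : x 1 * y 1 = 1) - y 1 * hx₁
  have e₂ : y 2 = x 2 := by
    have hx₂0 : x 2 ≠ 0 := by rw [← abs_ne_zero, h₂]; exact hμ.ne'
    exact mul_left_cancel₀ hx₂0 (by nlinarith)
  ext i; fin_cases i
  exacts [e₀.trans h₀.symm, e₁, e₂]

theorem extremePoints_modelPolytope (hμ₀ : 0 < μ) (hμ₁ : μ ≤ 1) :
    (modelPolytope μ).extremePoints ℝ = modelVertices μ := by
  refine subset_antisymm ?_ fun x hx => exposedPoints_subset_extremePoints ?_
  · rw [modelPolytope_eq_convexHull hμ₀ hμ₁]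
    exact extremePoints_convexHull_subset
  simp only [modelVertices, Set.mem_insert_iff, Set.mem_singleton_iff] at hx
  rcases hx with rfl | rfl | rfl | rfl | rfl | rfl | rfl | rfl <;>
  first
    | (refine corner_mem_exposedPoints_modelPolytope (by linarith) ?_ ?_ ?_ <;> simp <;> done)
    | (refine apex_mem_exposedPoints_modelPolytope hμ₀ ?_ ?_ ?_ <;> simp [hμ₀.le])

end Model

def pretzelCoords (a b c : ℝ) : (Fin 3 → ℝ) →ₗ[ℝ] Fin 3 → ℝ :=
  Matrix.toLin' !![b + c - 1, -c, -b; 0, -a - 1, a + 1; 1 - b - c, c - 1, b - 1]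

section Pretzel

variable {a b c : ℝ}

@[simp] theorem pretzelCoords_apply (v : Fin 3 → ℝ) :
    pretzelCoords a b c v = ![(b + c - 1) * v 0 - c * v 1 - b * v 2, (-a - 1) * (v 1 - v 2),
      (1 - b - c) * v 0 + (c - 1) * v 1 + (b - 1) * v 2] := by
  ext i; fin_cases i <;> simp [pretzelCoords, dotProduct, Fin.sum_univ_three] <;> ring

theorem pretzelCoords_injective (hA : -a - 1 ≠ 0) (hS : b + c - 1 ≠ 0) :
    Function.Injective (pretzelCoords a b c) := by
  have hdet : (!![b + c - 1, -c, -b; 0, -a - 1, a + 1; 1 - b - c, c - 1, b - 1]).det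
      = -2 * (-a - 1) * (b + c - 1) := by
    rw [Matrix.det_fin_three]
    simp only [of_apply, cons_val', cons_val_zero, cons_val_one, cons_val, cons_val_fin_one]
    ring
  refine Matrix.mulVec_injective_iff_isUnit.2 ?_
  rw [Matrix.isUnit_iff_isUnit_det, hdet, isUnit_iff_ne_zero]
  exact mul_ne_zero (mul_ne_zero (by norm_num) hA) hS

theorem pretzelCoords_mem_modelPolytope_iff (hA : 1 ≤ -a - 1) (v : Fin 3 → ℝ) :
    pretzelCoords a b c v ∈ modelPolytope (-a - 1)⁻¹ ↔
      |![b + c - 1, -a - c - 1, 1 + a - b] ⬝ᵥ v| ≤ 1 ∧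
      |![b + c - 1, 1 + a - c, -a - b - 1] ⬝ᵥ v| ≤ 1 ∧
      |![1 - b - c, -a + c - 3, 1 + a + b] ⬝ᵥ v| ≤ 1 ∧
      |![1 - b - c, 1 + a + c, -a + b - 3] ⬝ᵥ v| ≤ 1 := by
  have hA₀ : -a - 1 ≠ 0 := by linarith
  have hμ : 0 ≤ 1 - (-a - 1)⁻¹ := sub_nonneg.2 (inv_le_one_of_one_le₀ hA)
  set z := pretzelCoords a b c v
  have hd : (1 - (-a - 1)⁻¹) * z 1 = (-a - 2) * (v 1 - v 2) := by
    simp only [z, pretzelCoords_apply, cons_val_one, cons_val_zero]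
    field_simp
    ring
  obtain ⟨h₁, h₂, h₃, h₄⟩ :
      ![b + c - 1, -a - c - 1, 1 + a - b] ⬝ᵥ v = z 0 + z 1 ∧
      ![b + c - 1, 1 + a - c, -a - b - 1] ⬝ᵥ v = z 0 - z 1 ∧
      ![1 - b - c, -a + c - 3, 1 + a + b] ⬝ᵥ v = z 2 + (1 - (-a - 1)⁻¹) * z 1 ∧
      ![1 - b - c, 1 + a + c, -a + b - 3] ⬝ᵥ v = z 2 - (1 - (-a - 1)⁻¹) * z 1 := by
    rw [hd]
    refine ⟨?_, ?_, ?_, ?_⟩ <;>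
      simp only [z, pretzelCoords_apply, dotProduct, Fin.sum_univ_three, cons_val_zero,
        cons_val_one, cons_val] <;>
      ring
  rw [modelPolytope, Set.mem_ofPred_eq, abs_add_abs_le_iff, ← abs_of_nonneg hμ, ← abs_mul,
    abs_add_abs_le_iff, h₁, h₂, h₃, h₄, and_assoc]

theorem pretzelCoords_vertices (hA : -a - 1 ≠ 0) (hS : b + c - 1 ≠ 0) :
    pretzelCoords a b c ((b + c - 1)⁻¹ • ![1, 0, 0]) = ![1, 0, -1] ∧
      pretzelCoords a b c (((-a - 1) * (b + c - 1))⁻¹ • ![c, b + c - 1, 0]) =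
        ![0, 1, -(-a - 1)⁻¹] ∧
      pretzelCoords a b c (((-a - 1) * (b + c - 1))⁻¹ • ![b, 0, b + c - 1]) =
        ![0, -1, -(-a - 1)⁻¹] ∧
      pretzelCoords a b c ![1, 1, 1] = ![-1, 0, -1] := by
  refine ⟨?_, ?_, ?_, ?_⟩ <;> ext i <;> fin_cases i <;>
    simp only [pretzelCoords_apply, smul_cons, smul_eq_mul, smul_empty, Fin.zero_eta, Fin.mk_one,
      Fin.reduceFinMk, cons_val_zero, cons_val_one, cons_val] <;>
    field_simp <;> ring

end Pretzel

/-- For the pretzel link `P(2a,2b,2c)` with `a ≤ -2`, `b, c ≥ 1`: the polyhedron `B`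
cut out by Thurston's inequality applied to the four Euler classes `γ₁, γ₂, γ₃, γ₄`
is the convex polytope with the eight vertices `±w₁, ±w₂, ±w₃, ±w₄`. -/
theorem pretzel_polyhedron_eq_convexHull
    (a b c : ℤ) (ha : a ≤ -2) (hb : 1 ≤ b) (hc : 1 ≤ c)
    (γ₁ γ₂ γ₃ γ₄ w₁ w₂ w₃ w₄ : Fin 3 → ℝ)
    (hγ₁ : γ₁ = ![(b : ℝ) + c - 1, -(a : ℝ) - c - 1, 1 + (a : ℝ) - b])
    (hγ₂ : γ₂ = ![(b : ℝ) + c - 1, 1 + (a : ℝ) - c, -(a : ℝ) - b - 1])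
    (hγ₃ : γ₃ = ![1 - (b : ℝ) - c, -(a : ℝ) + c - 3, 1 + (a : ℝ) + b])
    (hγ₄ : γ₄ = ![1 - (b : ℝ) - c, 1 + (a : ℝ) + c, -(a : ℝ) + b - 3])
    (hw₁ : w₁ = ((b : ℝ) + c - 1)⁻¹ • ![(1 : ℝ), 0, 0])
    (hw₂ : w₂ = ((-(a : ℝ) - 1) * ((b : ℝ) + c - 1))⁻¹ • ![(c : ℝ), (b : ℝ) + c - 1, 0])
    (hw₃ : w₃ = ((-(a : ℝ) - 1) * ((b : ℝ) + c - 1))⁻¹ • ![(b : ℝ), 0, (b : ℝ) + c - 1])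
    (hw₄ : w₄ = ![(1 : ℝ), 1, 1])
    (B : Set (Fin 3 → ℝ))
    (hB : B = {v : Fin 3 → ℝ |
      |γ₁ ⬝ᵥ v| ≤ 1 ∧ |γ₂ ⬝ᵥ v| ≤ 1 ∧ |γ₃ ⬝ᵥ v| ≤ 1 ∧ |γ₄ ⬝ᵥ v| ≤ 1}) :
    B = convexHull ℝ ({w₁, -w₁, w₂, -w₂, w₃, -w₃, w₄, -w₄} : Set (Fin 3 → ℝ)) ∧
      Convex ℝ B ∧ Bornology.IsBounded B ∧
      Set.extremePoints ℝ B = ({w₁, -w₁, w₂, -w₂, w₃, -w₃, w₄, -w₄} : Set (Fin 3 → ℝ)) := by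
  subst hγ₁ hγ₂ hγ₃ hγ₄
  have hA : (1 : ℝ) ≤ -a - 1 := by linarith [show (a : ℝ) ≤ -2 by exact_mod_cast ha]
  have hS : (0 : ℝ) < b + c - 1 := by
    linarith [show (1 : ℝ) ≤ b by exact_mod_cast hb, show (1 : ℝ) ≤ c by exact_mod_cast hc]
  have hA₀ : (-a - 1 : ℝ) ≠ 0 := by linarith
  have hμ₀ : 0 < (-(a : ℝ) - 1)⁻¹ := inv_pos.2 (by linarith)
  have hμ₁ : (-(a : ℝ) - 1)⁻¹ ≤ 1 := inv_le_one_of_one_le₀ hA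
  let T := LinearEquiv.ofInjectiveEndo (pretzelCoords a b c) (pretzelCoords_injective hA₀ hS.ne')
  set W : Set (Fin 3 → ℝ) := {w₁, -w₁, w₂, -w₂, w₃, -w₃, w₄, -w₄}
  have hTB : T '' B = modelPolytope (-a - 1)⁻¹ := by
    rw [hB, ← Set.image_preimage_eq (modelPolytope _) T.surjective]
    exact congrArg _ <| Set.ext fun v =>
      (pretzelCoords_mem_modelPolytope_iff (b := b) (c := c) hA v).symm
  have hTW : T '' W = modelVertices (-a - 1)⁻¹ := by
    obtain ⟨h₁, h₂, h₃, h₄⟩ := pretzelCoords_vertices (b := b) (c := c) hA₀ hS.ne'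
    subst hw₁ hw₂ hw₃ hw₄
    simp only [W, Set.image_insert_eq, Set.image_singleton, map_neg, T,
      LinearEquiv.coe_ofInjectiveEndo, h₁, h₂, h₃, h₄]
    rfl
  have hBW : B = convexHull ℝ W := T.injective.image_injective <| by
    rw [hTB, modelPolytope_eq_convexHull hμ₀ hμ₁, ← hTW]
    exact (LinearMap.image_convexHull T.toLinearMap W).symm
  refine ⟨hBW, hBW ▸ convex_convexHull ℝ W,
    hBW ▸ ((Set.toFinite W).isCompact_convexHull (𝕜 := ℝ)).isBounded,
    T.injective.image_injective ?_⟩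
  rw [image_extremePoints, hTB, extremePoints_modelPolytope hμ₀ hμ₁, hTW]
end

section
/- Fix integers a, b, c with a ≤ −2, b ≥ 1, c ≥ 1. Work in ℝ³ with the standard dot product and set γ₁ := (b+c−1, −a−c−1, 1+a−b), γ₂ := (b+c−1, 1+a−c, −a−b−1), γ₃ := (1−b−c, −a+c−3, 1+a+b), γ₄ := (1−b−c, 1+a+c, −a+b−3). Let N be any seminorm on ℝ³ such that: (i) |γᵢ · v| ≤ N(v) for every v ∈ ℝ³ and every i = 1,2,3,4; and (ii) N(1,0,0) ≤ b+c−1, N(c, b+c−1, 0) ≤ (−a−1)(b+c−1), N(b, 0, b+c−1) ≤ (−a−1)(b+c−1), and N(1,1,1) ≤ 1. Then N(v) = max{ |γ₁·v|, |γ₂·v|, |γ₃·v|, |γ₄·v| } for every v ∈ ℝ³; in particular {v : N(v) ≤ 1} = {v ∈ ℝ³ : |γᵢ·v| ≤ 1 for i = 1,2,3,4}. -/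
/-!
The function `v ↦ maxᵢ |γᵢ · v|` is a norm whose unit ball is the polytope with the eight
vertices `±(1,0,0)/S`, `±(c,S,0)/(AS)`, `±(b,0,S)/(AS)`, `±(1,1,1)`, where `S = b + c - 1` and
`A = -a - 1`. By (ii) the seminorm `N` is at most `1` at these vertices, so by convexity it is at
most `maxᵢ |γᵢ · v|`, and (i) is the reverse inequality. Concretely, up to the symmetry `v ↦ -v`
every `v` lies in a cone spanned by three of the vertex directions, and there the bound
`N v ≤ Σ |coefficient| · N(generator)` is exactly `±γᵢ · v` for a suitable `i`.
-/

open Matrix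

theorem Seminorm.le_of_eq_smul_add_smul_add_smul {𝕜 E : Type*} [SeminormedRing 𝕜] [AddGroup E]
    [SMul 𝕜 E] (N : Seminorm 𝕜 E) {v u₁ u₂ u₃ : E} {p q r : 𝕜} {m₁ m₂ m₃ : ℝ}
    (hv : v = p • u₁ + q • u₂ + r • u₃) (h₁ : N u₁ ≤ m₁) (h₂ : N u₂ ≤ m₂) (h₃ : N u₃ ≤ m₃) :
    N v ≤ ‖p‖ * m₁ + ‖q‖ * m₂ + ‖r‖ * m₃ := by
  subst hv
  calc N (p • u₁ + q • u₂ + r • u₃) ≤ N (p • u₁) + N (q • u₂) + N (r • u₃) :=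
        (map_add_le_add N _ _).trans (add_le_add_left (map_add_le_add N _ _) _)
    _ = ‖p‖ * N u₁ + ‖q‖ * N u₂ + ‖r‖ * N u₃ := by simp only [map_smul_eq_mul]
    _ ≤ ‖p‖ * m₁ + ‖q‖ * m₂ + ‖r‖ * m₃ := by gcongr

theorem abs_add_le_max_abs_add_abs_sub {α : Type*} [AddCommGroup α] [LinearOrder α]
    [IsOrderedAddMonoid α] (s t : α) : |s| + t ≤ max |t + s| |t - s| := by
  rcases abs_choice s with h | h <;> rw [h]
  · exact le_max_of_le_left (add_comm s t ▸ le_abs_self _)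
  · exact le_max_of_le_right (neg_add_eq_sub s t ▸ le_abs_self _)

namespace Pretzel

variable (a b c : ℝ)

def eulerClass₁ : Fin 3 → ℝ := ![b + c - 1, -a - c - 1, 1 + a - b]

def eulerClass₂ : Fin 3 → ℝ := ![b + c - 1, 1 + a - c, -a - b - 1]

def eulerClass₃ : Fin 3 → ℝ := ![1 - b - c, -a + c - 3, 1 + a + b]

def eulerClass₄ : Fin 3 → ℝ := ![1 - b - c, 1 + a + c, -a + b - 3]

def eulerClassNorm (v : Fin 3 → ℝ) : ℝ :=
  max (max |eulerClass₁ a b c ⬝ᵥ v| |eulerClass₂ a b c ⬝ᵥ v|)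
    (max |eulerClass₃ a b c ⬝ᵥ v| |eulerClass₄ a b c ⬝ᵥ v|)

theorem eulerClassNorm_neg (v : Fin 3 → ℝ) : eulerClassNorm a b c (-v) = eulerClassNorm a b c v := by
  simp only [eulerClassNorm, dotProduct_neg, abs_neg]

variable {a b c} {N : Seminorm ℝ (Fin 3 → ℝ)}

theorem le_eulerClassNorm_of_y_nonpos_z_nonneg (hS : 0 < b + c - 1)
    (h₁ : N ![1, 0, 0] ≤ b + c - 1) (h₂ : N ![c, b + c - 1, 0] ≤ (-a - 1) * (b + c - 1))
    (h₃ : N ![b, 0, b + c - 1] ≤ (-a - 1) * (b + c - 1)) {x y z : ℝ} (hy : y ≤ 0) (hz : 0 ≤ z) :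
    N ![x, y, z] ≤ eulerClassNorm a b c ![x, y, z] := by
  set S := b + c - 1
  set s := S * x - c * y - b * z
  have hv : ![x, y, z] = (s / S) • ![1, 0, 0] + (y / S) • ![c, S, 0] + (z / S) • ![b, 0, S] := by
    simp only [smul_cons, smul_eq_mul, smul_empty, add_cons, head_cons, tail_cons, empty_add_empty,
      vecCons_inj, and_true]
    refine ⟨?_, ?_, ?_⟩ <;> field_simp <;> ring
  calc N ![x, y, z]
      ≤ ‖s / S‖ * S + ‖y / S‖ * ((-a - 1) * S) + ‖z / S‖ * ((-a - 1) * S) :=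
        N.le_of_eq_smul_add_smul_add_smul hv h₁ h₂ h₃
    _ = |s| + (-a - 1) * (z - y) := by
        simp only [Real.norm_eq_abs]
        rw [abs_div, abs_div, abs_div, abs_of_pos hS, abs_of_nonpos hy, abs_of_nonneg hz]
        field_simp
        ring
    _ ≤ max |(-a - 1) * (z - y) + s| |(-a - 1) * (z - y) - s| :=
        abs_add_le_max_abs_add_abs_sub _ _
    _ = max |eulerClass₂ a b c ⬝ᵥ ![x, y, z]| |eulerClass₁ a b c ⬝ᵥ ![x, y, z]| := by
        rw [abs_sub_comm]
        congr 2 <;> simp only [eulerClass₁, eulerClass₂, vec3_dotProduct', s, S] <;> ring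
    _ ≤ eulerClassNorm a b c ![x, y, z] :=
        max_le (le_max_of_le_left (le_max_right _ _)) (le_max_of_le_left (le_max_left _ _))

theorem le_eulerClassNorm_of_z_le_y_nonpos (hS : 0 < b + c - 1)
    (h₁ : N ![1, 0, 0] ≤ b + c - 1) (h₃ : N ![b, 0, b + c - 1] ≤ (-a - 1) * (b + c - 1))
    (h₄ : N ![1, 1, 1] ≤ 1) {x y z : ℝ} (hzy : z ≤ y) (hy : y ≤ 0) :
    N ![x, y, z] ≤ eulerClassNorm a b c ![x, y, z] := by
  set S := b + c - 1
  set s := S * x - S * y - b * (z - y)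
  have hv : ![x, y, z] = (s / S) • ![1, 0, 0] + ((z - y) / S) • ![b, 0, S] + y • ![1, 1, 1] := by
    simp only [smul_cons, smul_eq_mul, smul_empty, add_cons, head_cons, tail_cons, empty_add_empty,
      vecCons_inj, and_true]
    refine ⟨?_, ?_, ?_⟩ <;> field_simp <;> ring
  calc N ![x, y, z]
      ≤ ‖s / S‖ * S + ‖(z - y) / S‖ * ((-a - 1) * S) + ‖y‖ * 1 :=
        N.le_of_eq_smul_add_smul_add_smul hv h₁ h₃ h₄
    _ = |s| + ((-a - 1) * (y - z) - y) := by
        simp only [Real.norm_eq_abs]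
        rw [abs_div, abs_div, abs_of_pos hS, abs_of_nonpos (sub_nonpos.2 hzy), abs_of_nonpos hy]
        field_simp
        ring
    _ ≤ max |((-a - 1) * (y - z) - y) + s| |((-a - 1) * (y - z) - y) - s| :=
        abs_add_le_max_abs_add_abs_sub _ _
    _ = max |eulerClass₁ a b c ⬝ᵥ ![x, y, z]| |eulerClass₃ a b c ⬝ᵥ ![x, y, z]| := by
        congr 2 <;> simp only [eulerClass₁, eulerClass₃, vec3_dotProduct', s, S] <;> ring
    _ ≤ eulerClassNorm a b c ![x, y, z] :=
        max_le (le_max_of_le_left (le_max_left _ _)) (le_max_of_le_right (le_max_left _ _))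

theorem le_eulerClassNorm_of_y_le_z_nonpos (hS : 0 < b + c - 1)
    (h₁ : N ![1, 0, 0] ≤ b + c - 1) (h₂ : N ![c, b + c - 1, 0] ≤ (-a - 1) * (b + c - 1))
    (h₄ : N ![1, 1, 1] ≤ 1) {x y z : ℝ} (hyz : y ≤ z) (hz : z ≤ 0) :
    N ![x, y, z] ≤ eulerClassNorm a b c ![x, y, z] := by
  set S := b + c - 1
  set s := S * x - c * (y - z) - S * z
  have hv : ![x, y, z] = (s / S) • ![1, 0, 0] + ((y - z) / S) • ![c, S, 0] + z • ![1, 1, 1] := by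
    simp only [smul_cons, smul_eq_mul, smul_empty, add_cons, head_cons, tail_cons, empty_add_empty,
      vecCons_inj, and_true]
    refine ⟨?_, ?_, ?_⟩ <;> field_simp <;> ring
  calc N ![x, y, z]
      ≤ ‖s / S‖ * S + ‖(y - z) / S‖ * ((-a - 1) * S) + ‖z‖ * 1 :=
        N.le_of_eq_smul_add_smul_add_smul hv h₁ h₂ h₄
    _ = |s| + ((-a - 1) * (z - y) - z) := by
        simp only [Real.norm_eq_abs]
        rw [abs_div, abs_div, abs_of_pos hS, abs_of_nonpos (sub_nonpos.2 hyz), abs_of_nonpos hz]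
        field_simp
        ring
    _ ≤ max |((-a - 1) * (z - y) - z) + s| |((-a - 1) * (z - y) - z) - s| :=
        abs_add_le_max_abs_add_abs_sub _ _
    _ = max |eulerClass₂ a b c ⬝ᵥ ![x, y, z]| |eulerClass₄ a b c ⬝ᵥ ![x, y, z]| := by
        congr 2 <;> simp only [eulerClass₂, eulerClass₄, vec3_dotProduct', s, S] <;> ring
    _ ≤ eulerClassNorm a b c ![x, y, z] :=
        max_le (le_max_of_le_left (le_max_right _ _)) (le_max_of_le_right (le_max_right _ _))

theorem le_eulerClassNorm_of_y_nonpos (hS : 0 < b + c - 1)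
    (h₁ : N ![1, 0, 0] ≤ b + c - 1) (h₂ : N ![c, b + c - 1, 0] ≤ (-a - 1) * (b + c - 1))
    (h₃ : N ![b, 0, b + c - 1] ≤ (-a - 1) * (b + c - 1)) (h₄ : N ![1, 1, 1] ≤ 1)
    {v : Fin 3 → ℝ} (hy : v 1 ≤ 0) : N v ≤ eulerClassNorm a b c v := by
  rw [← FinVec.etaExpand_eq v]
  rcases le_total 0 (v 2) with hz | hz
  · exact le_eulerClassNorm_of_y_nonpos_z_nonneg hS h₁ h₂ h₃ hy hz
  rcases le_total (v 2) (v 1) with hzy | hyz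
  · exact le_eulerClassNorm_of_z_le_y_nonpos hS h₁ h₃ h₄ hzy hy
  · exact le_eulerClassNorm_of_y_le_z_nonpos hS h₁ h₂ h₄ hyz hz

theorem le_eulerClassNorm (hS : 0 < b + c - 1)
    (h₁ : N ![1, 0, 0] ≤ b + c - 1) (h₂ : N ![c, b + c - 1, 0] ≤ (-a - 1) * (b + c - 1))
    (h₃ : N ![b, 0, b + c - 1] ≤ (-a - 1) * (b + c - 1)) (h₄ : N ![1, 1, 1] ≤ 1)
    (v : Fin 3 → ℝ) : N v ≤ eulerClassNorm a b c v := by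
  rcases le_total (v 1) 0 with hy | hy
  · exact le_eulerClassNorm_of_y_nonpos hS h₁ h₂ h₃ h₄ hy
  · simpa only [map_neg_eq_map, eulerClassNorm_neg] using
      le_eulerClassNorm_of_y_nonpos hS h₁ h₂ h₃ h₄ (v := -v) (neg_nonpos.2 hy)

end Pretzel

open Pretzel in
theorem pretzel_norm_eq_max_general
    (a b c : ℤ) (hb : 1 ≤ b) (hc : 1 ≤ c)
    (γ₁ γ₂ γ₃ γ₄ : Fin 3 → ℝ)
    (hγ₁ : γ₁ = ![(b : ℝ) + c - 1, -(a : ℝ) - c - 1, 1 + (a : ℝ) - b])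
    (hγ₂ : γ₂ = ![(b : ℝ) + c - 1, 1 + (a : ℝ) - c, -(a : ℝ) - b - 1])
    (hγ₃ : γ₃ = ![1 - (b : ℝ) - c, -(a : ℝ) + c - 3, 1 + (a : ℝ) + b])
    (hγ₄ : γ₄ = ![1 - (b : ℝ) - c, 1 + (a : ℝ) + c, -(a : ℝ) + b - 3])
    (N : Seminorm ℝ (Fin 3 → ℝ))
    (hlow₁ : ∀ v : Fin 3 → ℝ, |γ₁ ⬝ᵥ v| ≤ N v)
    (hlow₂ : ∀ v : Fin 3 → ℝ, |γ₂ ⬝ᵥ v| ≤ N v)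
    (hlow₃ : ∀ v : Fin 3 → ℝ, |γ₃ ⬝ᵥ v| ≤ N v)
    (hlow₄ : ∀ v : Fin 3 → ℝ, |γ₄ ⬝ᵥ v| ≤ N v)
    (hup₁ : N ![(1 : ℝ), 0, 0] ≤ (b : ℝ) + c - 1)
    (hup₂ : N ![(c : ℝ), (b : ℝ) + c - 1, 0] ≤ (-(a : ℝ) - 1) * ((b : ℝ) + c - 1))
    (hup₃ : N ![(b : ℝ), 0, (b : ℝ) + c - 1] ≤ (-(a : ℝ) - 1) * ((b : ℝ) + c - 1))
    (hup₄ : N ![(1 : ℝ), 1, 1] ≤ 1) :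
    (∀ v : Fin 3 → ℝ,
        N v = max (max |γ₁ ⬝ᵥ v| |γ₂ ⬝ᵥ v|) (max |γ₃ ⬝ᵥ v| |γ₄ ⬝ᵥ v|)) ∧
      {v : Fin 3 → ℝ | N v ≤ 1} =
        {v : Fin 3 → ℝ |
          |γ₁ ⬝ᵥ v| ≤ 1 ∧ |γ₂ ⬝ᵥ v| ≤ 1 ∧ |γ₃ ⬝ᵥ v| ≤ 1 ∧ |γ₄ ⬝ᵥ v| ≤ 1} := by
  subst hγ₁ hγ₂ hγ₃ hγ₄
  have hS : (0 : ℝ) < b + c - 1 := by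
    have : (2 : ℝ) ≤ b + c := by exact_mod_cast add_le_add hb hc
    linarith
  have hN : ∀ v, N v = eulerClassNorm a b c v := fun v =>
    le_antisymm (le_eulerClassNorm hS hup₁ hup₂ hup₃ hup₄ v)
      (max_le (max_le (hlow₁ v) (hlow₂ v)) (max_le (hlow₃ v) (hlow₄ v)))
  refine ⟨hN, Set.ext fun v => ?_⟩
  simp only [Set.mem_ofPred_eq, hN, eulerClassNorm, max_le_iff, and_assoc]
  rfl

/-- Computation of the Thurston norm of the exterior of the pretzel link
`P(2a,2b,2c)` with `a ≤ -2`, `b, c ≥ 1` and `ab + bc + ac ≤ a`, abstracted: any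
seminorm `N` on `ℝ³` dominating `|γᵢ · v|` for the four Euler classes and taking
values at most the prescribed ones on the four explicit surface classes equals
`max_i |γᵢ · v|`. -/
theorem pretzel_norm_eq_max
    (a b c : ℤ) (ha : a ≤ -2) (hb : 1 ≤ b) (hc : 1 ≤ c)
    (γ₁ γ₂ γ₃ γ₄ : Fin 3 → ℝ)
    (hγ₁ : γ₁ = ![(b : ℝ) + c - 1, -(a : ℝ) - c - 1, 1 + (a : ℝ) - b])
    (hγ₂ : γ₂ = ![(b : ℝ) + c - 1, 1 + (a : ℝ) - c, -(a : ℝ) - b - 1])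
    (hγ₃ : γ₃ = ![1 - (b : ℝ) - c, -(a : ℝ) + c - 3, 1 + (a : ℝ) + b])
    (hγ₄ : γ₄ = ![1 - (b : ℝ) - c, 1 + (a : ℝ) + c, -(a : ℝ) + b - 3])
    (N : Seminorm ℝ (Fin 3 → ℝ))
    (hlow₁ : ∀ v : Fin 3 → ℝ, |γ₁ ⬝ᵥ v| ≤ N v)
    (hlow₂ : ∀ v : Fin 3 → ℝ, |γ₂ ⬝ᵥ v| ≤ N v)
    (hlow₃ : ∀ v : Fin 3 → ℝ, |γ₃ ⬝ᵥ v| ≤ N v)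
    (hlow₄ : ∀ v : Fin 3 → ℝ, |γ₄ ⬝ᵥ v| ≤ N v)
    (hup₁ : N ![(1 : ℝ), 0, 0] ≤ (b : ℝ) + c - 1)
    (hup₂ : N ![(c : ℝ), (b : ℝ) + c - 1, 0] ≤ (-(a : ℝ) - 1) * ((b : ℝ) + c - 1))
    (hup₃ : N ![(b : ℝ), 0, (b : ℝ) + c - 1] ≤ (-(a : ℝ) - 1) * ((b : ℝ) + c - 1))
    (hup₄ : N ![(1 : ℝ), 1, 1] ≤ 1) :
    (∀ v : Fin 3 → ℝ,
        N v = max (max |γ₁ ⬝ᵥ v| |γ₂ ⬝ᵥ v|) (max |γ₃ ⬝ᵥ v| |γ₄ ⬝ᵥ v|)) ∧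
      {v : Fin 3 → ℝ | N v ≤ 1} =
        {v : Fin 3 → ℝ |
          |γ₁ ⬝ᵥ v| ≤ 1 ∧ |γ₂ ⬝ᵥ v| ≤ 1 ∧ |γ₃ ⬝ᵥ v| ≤ 1 ∧ |γ₄ ⬝ᵥ v| ≤ 1} :=
  pretzel_norm_eq_max_general a b c hb hc γ₁ γ₂ γ₃ γ₄ hγ₁ hγ₂ hγ₃ hγ₄ N hlow₁ hlow₂ hlow₃ hlow₄ hup₁
    hup₂ hup₃ hup₄
end
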